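/- Let d ≥ 2 and work in ℂ^d ⊗ ℂ^d. The linear span S_{P,0,∞} of the Parthasarathy space S_P together with z₀ and z_∞ contains infinitely many distinct one-dimensional subspaces spanned by product vectors; explicitly, for every a ∈ ℂ, the product vector (|0⟩ + a|d−1⟩) ⊗ (|0⟩ − a|d−1⟩) lies in S_{P,0,∞}. In particular, S_{P,0,∞} is not a quasi-completely entangled subspace. -/

import Mathlib

noncomputable section

/-- the Hilbert space ℂ^d ⊗ ℂ^d, realized as ℂ^{d²} -/
abbrev Hdd (d : ℕ) : Type := EuclideanSpace ℂ (Fin d × Fin d)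

/-- elementary tensor u ⊗ v of two vectors of ℂ^d -/
def tpdd (d : ℕ) (u v : EuclideanSpace ℂ (Fin d)) : Hdd d := WithLp.toLp 2 (fun p : Fin d × Fin d => u p.1 * v p.2)

/-- the vector Σ_s λ^s |s⟩ of ℂ^d -/
def vandd (d : ℕ) (lam : ℂ) : EuclideanSpace ℂ (Fin d) := WithLp.toLp 2 (fun s : Fin d => lam ^ (s : ℕ))

/-- the van der Monde vector z_λ -/
def zdd (d : ℕ) (lam : ℂ) : Hdd d := tpdd d (vandd d lam) (vandd d lam)

/-- the vector |0⟩ of ℂ^d -/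
def firstd (d : ℕ) : EuclideanSpace ℂ (Fin d) := WithLp.toLp 2 (fun s : Fin d => if (s : ℕ) = 0 then 1 else 0)

/-- the vector |d−1⟩ of ℂ^d -/
def lastd (d : ℕ) : EuclideanSpace ℂ (Fin d) := WithLp.toLp 2 (fun s : Fin d => if (s : ℕ) = d - 1 then 1 else 0)

/-- the van der Monde vector z_∞ = |d−1⟩ ⊗ |d−1⟩ -/
def zddinf (d : ℕ) : Hdd d := tpdd d (lastd d) (lastd d)

/-- the span of all van der Monde vectors -/
def Fdd (d : ℕ) : Submodule ℂ (Hdd d) :=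
  Submodule.span ℂ (insert (zddinf d) (Set.range (zdd d)))

/-- the Parthasarathy completely entangled subspace of ℂ^d ⊗ ℂ^d -/
def SPdd (d : ℕ) : Submodule ℂ (Hdd d) := (Fdd d)ᗮ

/-- the double perturbation of `S_P` by `z₀` and `z_∞` -/
def SP0inf (d : ℕ) : Submodule ℂ (Hdd d) :=
  SPdd d ⊔ Submodule.span ℂ {zdd d 0} ⊔ Submodule.span ℂ {zddinf d}

/-- the set of one-dimensional subspaces of `T` spanned by (nonzero) product vectors -/
def prodLinesdd (d : ℕ) (T : Submodule ℂ (Hdd d)) : Set (Submodule ℂ (Hdd d)) :=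
  {L | ∃ ξ : Hdd d, ξ ≠ 0 ∧ ξ ∈ T ∧ (∃ u v, ξ = tpdd d u v) ∧ L = Submodule.span ℂ {ξ}}

/-!
With `f = |0⟩ = vandd d 0` and `l = |d−1⟩`,
`(f + a l) ⊗ (f − a l) = z₀ − a² z_∞ + a (l ⊗ f − f ⊗ l)`.
An antisymmetric tensor `u ⊗ v − v ⊗ u` is orthogonal to every symmetric product `x ⊗ x`, in
particular to every `z_λ`, so it lies in `S_P`. The coordinates of `(f + a l) ⊗ (f − a l)` at
`|0⟩ ⊗ |0⟩` and `|0⟩ ⊗ |d−1⟩` are `1` and `−a`, so distinct `a` give distinct lines.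
-/

open scoped InnerProductSpace

lemma Function.Injective.span_singleton {K V ι : Type*} [Field K] [AddCommGroup V] [Module K V]
    {f : ι → V} (hf : Function.Injective f) (φ : V →ₗ[K] K) (hφ : ∀ i, φ (f i) = 1) :
    Function.Injective fun i => K ∙ f i := by
  intro i j hij
  obtain ⟨c, hc⟩ := Submodule.mem_span_singleton.1 (hij.le (Submodule.mem_span_singleton_self _))
  have hc1 : c = 1 := by simpa [hφ] using congrArg φ hc
  exact hf (by rw [← hc, hc1, one_smul])

section ProductVectors

variable {d : ℕ}

@[simp] lemma tpdd_apply (u v : EuclideanSpace ℂ (Fin d)) (i j : Fin d) :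
    tpdd d u v (i, j) = u i * v j := rfl

lemma inner_tpdd (u v x y : EuclideanSpace ℂ (Fin d)) :
    ⟪tpdd d u v, tpdd d x y⟫_ℂ = ⟪u, x⟫_ℂ * ⟪v, y⟫_ℂ := by
  simp only [PiLp.inner_apply, RCLike.inner_apply, tpdd, Finset.sum_mul_sum,
    Fintype.sum_prod_type, map_mul]
  congr 1; ext i; congr 1; ext j; ring

lemma tpdd_add_smul_sub_smul (f l : EuclideanSpace ℂ (Fin d)) (a : ℂ) :
    tpdd d (f + a • l) (f - a • l)
      = tpdd d f f - a ^ 2 • tpdd d l l + a • (tpdd d l f - tpdd d f l) := by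
  ext ⟨i, j⟩
  simp only [tpdd_apply, PiLp.add_apply, PiLp.sub_apply, PiLp.smul_apply, smul_eq_mul]
  ring

end ProductVectors

section Parthasarathy

variable (d : ℕ)

lemma vandd_zero : vandd d 0 = firstd d := by
  ext s
  simp [vandd, firstd, zero_pow_eq]

lemma Fdd_le_span_tpdd_diag : Fdd d ≤ Submodule.span ℂ (Set.range fun x => tpdd d x x) := by
  refine Submodule.span_mono (Set.insert_subset ⟨_, rfl⟩ ?_)
  rintro _ ⟨lam, rfl⟩
  exact ⟨_, rfl⟩

lemma tpdd_sub_tpdd_swap_mem_SPdd (u v : EuclideanSpace ℂ (Fin d)) :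
    tpdd d u v - tpdd d v u ∈ SPdd d := by
  rw [← Submodule.span_singleton_le_iff_mem, SPdd, ← Submodule.isOrtho_iff_le]
  refine Submodule.IsOrtho.mono_right (Fdd_le_span_tpdd_diag d) (Submodule.isOrtho_span.2 ?_)
  rintro _ rfl _ ⟨x, rfl⟩
  rw [inner_sub_left, inner_tpdd, inner_tpdd, sub_eq_zero, mul_comm]

lemma tpdd_first_add_smul_last_mem_SP0inf (a : ℂ) :
    tpdd d (firstd d + a • lastd d) (firstd d - a • lastd d) ∈ SP0inf d := by
  have hz₀ : tpdd d (firstd d) (firstd d) ∈ SP0inf d := by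
    rw [← vandd_zero]
    exact Submodule.mem_sup_left (Submodule.mem_sup_right (Submodule.mem_span_singleton_self _))
  have hz_inf : tpdd d (lastd d) (lastd d) ∈ SP0inf d :=
    Submodule.mem_sup_right (Submodule.mem_span_singleton_self _)
  have hSP : tpdd d (lastd d) (firstd d) - tpdd d (firstd d) (lastd d) ∈ SP0inf d :=
    Submodule.mem_sup_left (Submodule.mem_sup_left (tpdd_sub_tpdd_swap_mem_SPdd d _ _))
  rw [tpdd_add_smul_sub_smul]
  exact add_mem (sub_mem hz₀ (Submodule.smul_mem _ _ hz_inf)) (Submodule.smul_mem _ _ hSP)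

lemma tpdd_first_add_smul_last_apply_zero_zero (hd : 2 ≤ d) (a : ℂ) :
    tpdd d (firstd d + a • lastd d) (firstd d - a • lastd d) (⟨0, by omega⟩, ⟨0, by omega⟩) = 1 := by
  simp [firstd, lastd, show 0 ≠ d - 1 by omega]

lemma tpdd_first_add_smul_last_apply_zero_last (hd : 2 ≤ d) (a : ℂ) :
    tpdd d (firstd d + a • lastd d) (firstd d - a • lastd d) (⟨0, by omega⟩, ⟨d - 1, by omega⟩)
      = -a := by
  simp [firstd, lastd, show 0 ≠ d - 1 by omega, show d - 1 ≠ 0 by omega]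

end Parthasarathy

theorem statement17 (d : ℕ) (hd : 2 ≤ d) :
    (∀ a : ℂ, tpdd d (firstd d + a • lastd d) (firstd d - a • lastd d) ∈ SP0inf d) ∧
    (prodLinesdd d (SP0inf d)).Infinite := by
  let ξ (a : ℂ) : Hdd d := tpdd d (firstd d + a • lastd d) (firstd d - a • lastd d)
  let φ : Hdd d →ₗ[ℂ] ℂ := EuclideanSpace.projₗ (⟨0, by omega⟩, ⟨0, by omega⟩)
  have hφ (a : ℂ) : φ (ξ a) = 1 := tpdd_first_add_smul_last_apply_zero_zero d hd a
  have hξ_ne (a : ℂ) : ξ a ≠ 0 := ne_of_apply_ne φ (by rw [hφ, map_zero]; exact one_ne_zero)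
  have hξ : Function.Injective ξ := fun a b hab => by
    simpa [ξ, tpdd_first_add_smul_last_apply_zero_last d hd] using
      congrArg (EuclideanSpace.projₗ (⟨0, by omega⟩, ⟨d - 1, by omega⟩)) hab
  refine ⟨tpdd_first_add_smul_last_mem_SP0inf d, ?_⟩
  exact Set.infinite_of_injective_forall_mem (hξ.span_singleton φ hφ) fun a =>
    ⟨ξ a, hξ_ne a, tpdd_first_add_smul_last_mem_SP0inf d a, ⟨_, _, rfl⟩, rfl⟩
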